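/- Suppose the graph G = (V, E) is connected, Q ∈ ℝ^{|E|×|V|} is its oriented incidence matrix, and T = {τ_1, …, τ_d} is a (d, α, β, r, R) row covering of Q. Then the block gossip method on G with blocks determined by T converges at least linearly in expectation: E‖c_k − c*‖² ≤ (1 − r·α(G)/(β d))^k ‖c − c*‖², where c is the initial vector of node values, c* = mean(c)·1, and α(G) is the algebraic connectivity of G. -/

import Mathlib

open Matrix

noncomputable section

open Classical in

/-- The Moore–Penrose pseudoinverse of a real matrix, defined via the four Penrose
conditions (which always admit a unique solution). -/
def mpinv {m n : Type*} [Fintype m] [Fintype n] (A : Matrix m n ℝ) : Matrix n m ℝ :=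
  if h : ∃ B : Matrix n m ℝ,
      A * B * A = A ∧ B * A * B = B ∧ (A * B)ᵀ = A * B ∧ (B * A)ᵀ = B * A
  then h.choose else 0

/-- Smallest nonzero eigenvalue of a square real matrix. -/
def lambdaMinPos {k : Type*} [Fintype k] [DecidableEq k] (M : Matrix k k ℝ) : ℝ :=
  sInf {μ : ℝ | μ ≠ 0 ∧ μ ∈ spectrum ℝ M}

/-- Largest eigenvalue of a square real matrix. -/
def lambdaMax {k : Type*} [Fintype k] [DecidableEq k] (M : Matrix k k ℝ) : ℝ :=
  sSup (spectrum ℝ M)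

/-- Squared Euclidean norm of a vector. -/
def sqNorm {k : Type*} [Fintype k] (v : k → ℝ) : ℝ := ∑ i, (v i) ^ 2

/-- The row submatrix of `A` with rows indexed by the subset `τ`. -/
def rowSub {ι κ : Type*} (A : Matrix ι κ ℝ) (τ : Finset ι) : Matrix τ κ ℝ :=
  Matrix.of fun i j => A i.1 j

/-- `T = (τ_1, …, τ_d)` is a `(d, a, β, r, R)` row covering of `A`:
the blocks cover all row indices, `a` lower-bounds the smallest nonzero eigenvalue and `β`
upper-bounds the largest eigenvalue of each `A_τ A_τᵀ`, and `r` (resp. `R`) is the minimum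
(resp. maximum) number of blocks containing any single row. -/
structure IsRowCovering {ι κ : Type*} [Fintype ι] [DecidableEq ι] [Fintype κ] {d : ℕ}
    (A : Matrix ι κ ℝ) (τ : Fin d → Finset ι) (a β : ℝ) (r R : ℕ) : Prop where
  cover : ∀ i : ι, ∃ l, i ∈ τ l
  alpha_le : ∀ l, a ≤ lambdaMinPos (rowSub A (τ l) * (rowSub A (τ l))ᵀ)
  le_beta : ∀ l, lambdaMax (rowSub A (τ l) * (rowSub A (τ l))ᵀ) ≤ β
  r_le : ∀ i : ι, r ≤ (Finset.univ.filter fun l => i ∈ τ l).card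
  r_attained : ∃ i : ι, (Finset.univ.filter fun l => i ∈ τ l).card = r
  le_R : ∀ i : ι, (Finset.univ.filter fun l => i ∈ τ l).card ≤ R
  R_attained : ∃ i : ι, (Finset.univ.filter fun l => i ∈ τ l).card = R

/-- One step of the block Kaczmarz method with block `τ`:
`x ↦ x + A_τ† (b_τ − A_τ x)`. -/
def kaczStep {ι κ : Type*} [Fintype ι] [Fintype κ] (A : Matrix ι κ ℝ) (b : ι → ℝ)
    (τ : Finset ι) (x : κ → ℝ) : κ → ℝ :=
  x + (mpinv (rowSub A τ)).mulVec (fun i : τ => b i.1 - (rowSub A τ).mulVec x i)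

/-- The iterates of the block (randomized) Kaczmarz method, as a function of the sequence
`σ` of block choices: `x_k = x_{k-1} + A_τ† (b_τ − A_τ x_{k-1})` with `τ = τs (σ k)`. -/
def kaczIter {ι κ : Type*} [Fintype ι] [Fintype κ] {d : ℕ} (A : Matrix ι κ ℝ) (b : ι → ℝ)
    (τs : Fin d → Finset ι) (x0 : κ → ℝ) : ∀ k : ℕ, (Fin k → Fin d) → κ → ℝ
  | 0, _ => x0
  | (k + 1), σ => kaczStep A b (τs (σ (Fin.last k))) (kaczIter A b τs x0 k (σ ∘ Fin.castSucc))

/-- `Q` is an oriented incidence matrix of the graph `G`, with `hd e` and `tl e` the head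
and tail of the (arbitrary) orientation of the edge indexed by the row `e`: the rows of
`Q` are in bijection with the edges of `G`, and the row of edge `{i, j}` has entry `+1`
in column `i`, `−1` in column `j`, and `0` elsewhere. -/
def IsOrientedIncidence {V E : Type*} [DecidableEq V] (G : SimpleGraph V)
    (hd tl : E → V) (Q : Matrix E V ℝ) : Prop :=
  (∀ e, G.Adj (hd e) (tl e)) ∧
  (∀ a b : V, G.Adj a b → ∃! e : E, s(hd e, tl e) = s(a, b)) ∧
  (∀ e v, Q e v = if v = hd e then 1 else if v = tl e then -1 else 0)

/-- The set of vertices incident to some edge of the block `τ`. -/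
def endpts {V E : Type*} [DecidableEq V] (hd tl : E → V) (τ : Finset E) : Finset V :=
  τ.biUnion fun e => {hd e, tl e}

/-- The edge-induced subgraph determined by the block `τ` is connected: any two of
its vertices are joined by a walk using only edges of `τ`. -/
def IsConnectedBlock {V E : Type*} [DecidableEq V] (hd tl : E → V) (τ : Finset E) : Prop :=
  ∀ a ∈ endpts hd tl τ, ∀ b ∈ endpts hd tl τ,
    (SimpleGraph.fromEdgeSet {p : Sym2 V | ∃ e ∈ τ, s(hd e, tl e) = p}).Reachable a b

/-!
The error `eₖ = cₖ - c*` evolves by `eₖ = (I - P_τ) eₖ₋₁`, where `P_τ = Q_τ† Q_τ` is the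
orthogonal projection onto the row space of `Q_τ`, and it stays orthogonal to `ker Q`, the
constants (by connectivity). By Pythagoras `‖(I - P_τ) e‖² = ‖e‖² - ‖P_τ e‖²`, while
`‖Q_τ e‖² = ‖Q_τ P_τ e‖² ≤ β ‖P_τ e‖²`. Summing over the blocks, which cover every edge at least
`r` times, gives `∑_τ ‖P_τ e‖² ≥ (r / β) ‖Q e‖² ≥ (r α(G) / β) ‖e‖²`, because `e ⊥ ker (QᵀQ)`.
So each step contracts the mean squared error by `1 - r α(G) / (β d)`.
-/

lemma sqNorm_eq_dotProduct {k : Type*} [Fintype k] (v : k → ℝ) : sqNorm v = v ⬝ᵥ v := by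
  simp [sqNorm, dotProduct, sq]

lemma sqNorm_nonneg {k : Type*} [Fintype k] (v : k → ℝ) : 0 ≤ sqNorm v :=
  Finset.sum_nonneg fun i _ => sq_nonneg (v i)

lemma le_pow_mul_of_le_mul {S : ℕ → ℝ} {c : ℝ} (hS : ∀ k, 0 ≤ S k)
    (h : ∀ k, S (k + 1) ≤ c * S k) (k : ℕ) : S k ≤ c ^ k * S 0 := by
  rcases le_or_gt 0 c with hc | hc
  · induction k with
    | zero => simp
    | succ k ih => calc
        S (k + 1) ≤ c * S k := h k
        _ ≤ c * (c ^ k * S 0) := by gcongr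
        _ = c ^ (k + 1) * S 0 := by ring
  · have hS0 : S 0 = 0 := by nlinarith [h 0, hS 0, hS 1]
    cases k with
    | zero => simp
    | succ k => rw [hS0, mul_zero]; nlinarith [h k, hS k]

section Spectral

variable {k : Type*} [Fintype k] [DecidableEq k] {M : Matrix k k ℝ}

lemma Matrix.mem_spectrum_of_mulVec_eq {v : k → ℝ} {μ : ℝ} (hv : v ≠ 0) (h : M *ᵥ v = μ • v) :
    μ ∈ spectrum ℝ M := by
  rw [← spectrum_toLin', ← Module.End.hasEigenvalue_iff_mem_spectrum]
  exact Module.End.hasEigenvalue_of_hasEigenvector ⟨Module.End.mem_eigenspace_iff.mpr h, hv⟩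

namespace Matrix.IsHermitian

lemma eigenvectorBasis_dotProduct_mulVec (hM : M.IsHermitian) (i : k) (v : k → ℝ) :
    ⇑(hM.eigenvectorBasis i) ⬝ᵥ M *ᵥ v = hM.eigenvalues i * (⇑(hM.eigenvectorBasis i) ⬝ᵥ v) := by
  have hMt : Mᵀ = M := by simpa [conjTranspose_eq_transpose_of_trivial] using hM.eq
  rw [dotProduct_mulVec, ← mulVec_transpose, hMt, hM.mulVec_eigenvectorBasis, smul_dotProduct,
    smul_eq_mul]

lemma sqNorm_eq_sum_eigenvectorBasis (hM : M.IsHermitian) (v : k → ℝ) :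
    sqNorm v = ∑ i, (⇑(hM.eigenvectorBasis i) ⬝ᵥ v) ^ 2 := by
  have := hM.eigenvectorBasis.sum_inner_mul_inner (WithLp.toLp 2 v) (WithLp.toLp 2 v)
  simp only [EuclideanSpace.inner_eq_star_dotProduct, star_trivial] at this
  rw [sqNorm_eq_dotProduct, ← this]
  congr 1 with i
  rw [sq, dotProduct_comm]

lemma dotProduct_mulVec_eq_sum_eigenvalues (hM : M.IsHermitian) (v : k → ℝ) :
    v ⬝ᵥ M *ᵥ v = ∑ i, hM.eigenvalues i * (⇑(hM.eigenvectorBasis i) ⬝ᵥ v) ^ 2 := by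
  have := hM.eigenvectorBasis.sum_inner_mul_inner (WithLp.toLp 2 v) (WithLp.toLp 2 (M *ᵥ v))
  simp only [EuclideanSpace.inner_eq_star_dotProduct, star_trivial] at this
  rw [dotProduct_comm, ← this]
  congr 1 with i
  rw [dotProduct_comm (M *ᵥ v), hM.eigenvectorBasis_dotProduct_mulVec]
  ring

lemma dotProduct_mulVec_le_lambdaMax_mul (hM : M.IsHermitian) (v : k → ℝ) :
    v ⬝ᵥ M *ᵥ v ≤ lambdaMax M * sqNorm v := by
  rw [hM.dotProduct_mulVec_eq_sum_eigenvalues, hM.sqNorm_eq_sum_eigenvectorBasis, Finset.mul_sum]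
  gcongr with i
  exact le_csSup finite_real_spectrum.bddAbove (hM.eigenvalues_mem_spectrum_real i)

lemma lambdaMinPos_mul_le_dotProduct_mulVec (hM : M.IsHermitian) {v : k → ℝ}
    (hv : ∀ w, M *ᵥ w = 0 → w ⬝ᵥ v = 0) :
    lambdaMinPos M * sqNorm v ≤ v ⬝ᵥ M *ᵥ v := by
  rw [hM.dotProduct_mulVec_eq_sum_eigenvalues, hM.sqNorm_eq_sum_eigenvectorBasis, Finset.mul_sum]
  refine Finset.sum_le_sum fun i _ => ?_
  by_cases h0 : hM.eigenvalues i = 0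
  · rw [hv _ (by rw [hM.mulVec_eigenvectorBasis, h0, zero_smul])]
    simp
  · gcongr
    exact csInf_le (finite_real_spectrum.subset fun _ h => h.2).bddBelow
      ⟨h0, hM.eigenvalues_mem_spectrum_real i⟩

end Matrix.IsHermitian

lemma Matrix.PosSemidef.lambdaMax_nonneg (hM : M.PosSemidef) : 0 ≤ lambdaMax M := by
  refine Real.sSup_nonneg fun μ hμ => ?_
  rw [hM.isHermitian.spectrum_real_eq_range_eigenvalues] at hμ
  obtain ⟨i, rfl⟩ := hμ
  exact hM.eigenvalues_nonneg i

end Spectral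

namespace Matrix

variable {m n : Type*} [Fintype m] [Fintype n] (A : Matrix m n ℝ)

lemma posSemidef_transpose_mul_self : (Aᵀ * A).PosSemidef := by
  simpa [conjTranspose_eq_transpose_of_trivial] using posSemidef_conjTranspose_mul_self A

lemma posSemidef_mul_transpose_self : (A * Aᵀ).PosSemidef := by
  simpa [conjTranspose_eq_transpose_of_trivial] using posSemidef_self_mul_conjTranspose A

lemma sqNorm_mulVec (v : n → ℝ) : sqNorm (A *ᵥ v) = v ⬝ᵥ (Aᵀ * A) *ᵥ v := by
  rw [sqNorm_eq_dotProduct, ← mulVec_mulVec, dotProduct_mulVec, ← mulVec_transpose,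
    dotProduct_comm]

lemma mulVec_eq_zero_of_transpose_mul_mulVec_eq_zero {v : n → ℝ} (hv : (Aᵀ * A) *ᵥ v = 0) :
    A *ᵥ v = 0 := by
  rw [← dotProduct_self_eq_zero, ← sqNorm_eq_dotProduct, sqNorm_mulVec, hv, dotProduct_zero]

variable [DecidableEq m] [DecidableEq n]

lemma mem_spectrum_mul_transpose_of_ne_zero {μ : ℝ} (hμ : μ ∈ spectrum ℝ (Aᵀ * A))
    (hμ0 : μ ≠ 0) : μ ∈ spectrum ℝ (A * Aᵀ) := by
  have hM := (posSemidef_transpose_mul_self A).isHermitian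
  rw [hM.spectrum_real_eq_range_eigenvalues] at hμ
  obtain ⟨i, rfl⟩ := hμ
  set u := ⇑(hM.eigenvectorBasis i)
  have hu : (Aᵀ * A) *ᵥ u = hM.eigenvalues i • u := hM.mulVec_eigenvectorBasis i
  have hu0 : u ≠ 0 := (WithLp.ofLp_eq_zero 2).ne.2 (hM.eigenvectorBasis.orthonormal.ne_zero i)
  refine mem_spectrum_of_mulVec_eq (v := A *ᵥ u) (fun h => ?_) ?_
  · rw [← mulVec_mulVec, h, mulVec_zero, eq_comm, smul_eq_zero] at hu
    exact hu.elim hμ0 hu0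
  · rw [mulVec_mulVec, Matrix.mul_assoc, ← mulVec_mulVec, hu, mulVec_smul]

lemma lambdaMax_transpose_mul_le : lambdaMax (Aᵀ * A) ≤ lambdaMax (A * Aᵀ) := by
  have hAAt := (posSemidef_mul_transpose_self A).lambdaMax_nonneg
  refine Real.sSup_le (fun μ hμ => ?_) hAAt
  rcases eq_or_ne μ 0 with rfl | hμ0
  · exact hAAt
  · exact le_csSup finite_real_spectrum.bddAbove
      (mem_spectrum_mul_transpose_of_ne_zero A hμ hμ0)

lemma sqNorm_mulVec_le (v : n → ℝ) : sqNorm (A *ᵥ v) ≤ lambdaMax (A * Aᵀ) * sqNorm v := calc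
  sqNorm (A *ᵥ v) = v ⬝ᵥ (Aᵀ * A) *ᵥ v := sqNorm_mulVec A v
  _ ≤ lambdaMax (Aᵀ * A) * sqNorm v :=
    (posSemidef_transpose_mul_self A).isHermitian.dotProduct_mulVec_le_lambdaMax_mul v
  _ ≤ lambdaMax (A * Aᵀ) * sqNorm v := by
    gcongr
    · exact sqNorm_nonneg v
    · exact lambdaMax_transpose_mul_le A

end Matrix

theorem LinearMap.exists_penrose {E F : Type*} [NormedAddCommGroup E] [InnerProductSpace ℝ E]
    [FiniteDimensional ℝ E] [NormedAddCommGroup F] [InnerProductSpace ℝ F] (f : E →ₗ[ℝ] F) :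
    ∃ g : F →ₗ[ℝ] E, f ∘ₗ g ∘ₗ f = f ∧ g ∘ₗ f ∘ₗ g = g ∧
      (f ∘ₗ g).IsSymmetric ∧ (g ∘ₗ f).IsSymmetric := by
  set K := (ker f)ᗮ
  have hkerK : Kᗮ = ker f := Submodule.orthogonal_orthogonal _
  have hfP : ∀ x, f (K.starProjection x) = f x := fun x => by
    have := K.sub_starProjection_mem_orthogonal x
    rwa [hkerK, mem_ker, map_sub, sub_eq_zero, eq_comm] at this
  have hPf : ∀ x y, f x = f y → K.starProjection x = K.starProjection y := fun x y hxy => by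
    rw [← sub_eq_zero, ← map_sub, ← Submodule.coe_orthogonalProjectionOnto_apply,
      Submodule.coe_eq_zero, Submodule.orthogonalProjectionOnto_eq_zero_iff, hkerK,
      mem_ker, map_sub, hxy, sub_self]
  obtain ⟨h, hh⟩ := f.rangeRestrict.exists_rightInverse_of_surjective f.range_rangeRestrict
  have hfh : ∀ y : range f, f (h y) = y := fun y => congrArg Subtype.val (congr($hh y))
  let g : F →ₗ[ℝ] E :=
    K.starProjection.toLinearMap ∘ₗ h ∘ₗ (range f).orthogonalProjectionOnto.toLinearMap
  have hfg : f ∘ₗ g = (range f).starProjection := by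
    ext y
    simp [g, hfP, hfh]
  have hgf : g ∘ₗ f = K.starProjection := by
    ext x
    refine hPf _ _ ?_
    simp [hfh, Submodule.starProjection_eq_self_iff.mpr (mem_range_self f x)]
  refine ⟨g, ?_, ?_, ?_, ?_⟩
  · rw [← comp_assoc, hfg]
    ext x
    exact Submodule.starProjection_eq_self_iff.mpr (mem_range_self f x)
  · rw [← comp_assoc, hgf]
    ext y
    exact Submodule.starProjection_eq_self_iff.mpr (Submodule.starProjection_apply_mem _ _)
  · rw [hfg]; exact Submodule.starProjection_isSymmetric _
  · rw [hgf]; exact Submodule.starProjection_isSymmetric _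

theorem Matrix.exists_penrose {m n : Type*} [Fintype m] [Fintype n] (A : Matrix m n ℝ) :
    ∃ B : Matrix n m ℝ,
      A * B * A = A ∧ B * A * B = B ∧ (A * B)ᵀ = A * B ∧ (B * A)ᵀ = B * A := by
  classical
  obtain ⟨g, h1, h2, h3, h4⟩ := (toEuclideanLin A).exists_penrose
  obtain ⟨B, rfl⟩ := toEuclideanLin.surjective g
  rw [← toLpLin_mul_same, isSymmetric_toEuclideanLin_iff] at h3 h4
  refine ⟨B, toEuclideanLin.injective ?_, toEuclideanLin.injective ?_, ?_, ?_⟩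
  · rwa [toLpLin_mul_same, toLpLin_mul_same]
  · rwa [toLpLin_mul_same, toLpLin_mul_same]
  · simpa [conjTranspose_eq_transpose_of_trivial] using h3.eq
  · simpa [conjTranspose_eq_transpose_of_trivial] using h4.eq

section Projection

variable {m n : Type*} [Fintype m] [Fintype n] (A : Matrix m n ℝ)

lemma mpinv_penrose :
    A * mpinv A * A = A ∧ mpinv A * A * mpinv A = mpinv A ∧
      (A * mpinv A)ᵀ = A * mpinv A ∧ (mpinv A * A)ᵀ = mpinv A * A := by
  rw [mpinv, dif_pos (exists_penrose A)]
  exact (exists_penrose A).choose_spec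

lemma mulVec_mpinv_mul_mulVec (x : n → ℝ) : A *ᵥ (mpinv A * A) *ᵥ x = A *ᵥ x := by
  rw [mulVec_mulVec, ← Matrix.mul_assoc, (mpinv_penrose A).1]

lemma mpinv_mul_mulVec_dotProduct (x y : n → ℝ) :
    (mpinv A * A) *ᵥ x ⬝ᵥ y = x ⬝ᵥ (mpinv A * A) *ᵥ y := by
  rw [dotProduct_comm, dotProduct_mulVec, ← mulVec_transpose, (mpinv_penrose A).2.2.2,
    dotProduct_comm]

lemma mpinv_mul_mulVec_idem (x : n → ℝ) :
    (mpinv A * A) *ᵥ (mpinv A * A) *ᵥ x = (mpinv A * A) *ᵥ x := by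
  rw [mulVec_mulVec, ← Matrix.mul_assoc, (mpinv_penrose A).2.1]

lemma sqNorm_sub_mpinv_mul_mulVec (x : n → ℝ) :
    sqNorm (x - (mpinv A * A) *ᵥ x) = sqNorm x - sqNorm ((mpinv A * A) *ᵥ x) := by
  have hcross : x ⬝ᵥ (mpinv A * A) *ᵥ x = sqNorm ((mpinv A * A) *ᵥ x) := by
    rw [sqNorm_eq_dotProduct, mpinv_mul_mulVec_dotProduct, mpinv_mul_mulVec_idem]
  simp only [sqNorm_eq_dotProduct, sub_dotProduct, dotProduct_sub] at hcross ⊢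
  rw [dotProduct_comm ((mpinv A * A) *ᵥ x) x, hcross]
  ring

lemma dotProduct_mpinv_mul_mulVec_eq_zero {w : n → ℝ} (hw : A *ᵥ w = 0) (x : n → ℝ) :
    w ⬝ᵥ (mpinv A * A) *ᵥ x = 0 := by
  rw [← mpinv_mul_mulVec_dotProduct, ← mulVec_mulVec, hw, mulVec_zero, zero_dotProduct]

lemma sqNorm_mulVec_le_mpinv_mul_mulVec [DecidableEq m] [DecidableEq n] (x : n → ℝ) :
    sqNorm (A *ᵥ x) ≤ lambdaMax (A * Aᵀ) * sqNorm ((mpinv A * A) *ᵥ x) := by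
  simpa only [mulVec_mpinv_mul_mulVec] using sqNorm_mulVec_le A ((mpinv A * A) *ᵥ x)

end Projection

section Kaczmarz

variable {ι κ : Type*} [Fintype κ] {A : Matrix ι κ ℝ} {b : ι → ℝ}

lemma orthogonal_ker_sub_mpinv_mul_mulVec {v : κ → ℝ} (hv : ∀ w, A *ᵥ w = 0 → w ⬝ᵥ v = 0)
    (τ : Finset ι) {w : κ → ℝ} (hw : A *ᵥ w = 0) :
    w ⬝ᵥ (v - (mpinv (rowSub A τ) * rowSub A τ) *ᵥ v) = 0 := by
  have hτw : rowSub A τ *ᵥ w = 0 := funext fun i => congrFun hw i.1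
  rw [dotProduct_sub, hv w hw, dotProduct_mpinv_mul_mulVec_eq_zero _ hτw, sub_zero]

variable [Fintype ι]

lemma kaczStep_sub_of_mulVec_eq {xs : κ → ℝ} (hxs : A *ᵥ xs = b) (τ : Finset ι) (x : κ → ℝ) :
    kaczStep A b τ x - xs = (x - xs) - (mpinv (rowSub A τ) * rowSub A τ) *ᵥ (x - xs) := by
  have hb : (fun i : τ => b i.1 - (rowSub A τ).mulVec x i) = rowSub A τ *ᵥ (xs - x) := by
    ext i
    rw [← hxs, mulVec_sub]
    rfl
  rw [kaczStep, hb, ← mulVec_mulVec, ← neg_sub x xs, mulVec_neg, mulVec_neg]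
  abel

lemma sum_kaczIter_succ {d : ℕ} (τs : Fin d → Finset ι) (x0 : κ → ℝ) (f : (κ → ℝ) → ℝ)
    (k : ℕ) :
    ∑ σ : Fin (k + 1) → Fin d, f (kaczIter A b τs x0 (k + 1) σ) =
      ∑ σ : Fin k → Fin d, ∑ l, f (kaczStep A b (τs l) (kaczIter A b τs x0 k σ)) := by
  rw [← (Fin.snocEquiv fun _ => Fin d).sum_comp, Fintype.sum_prod_type, Finset.sum_comm]
  simp [kaczIter, Function.comp_def]

end Kaczmarz

namespace IsRowCovering

variable {ι κ : Type*} [Fintype ι] [DecidableEq ι] [Fintype κ] {d : ℕ} {A : Matrix ι κ ℝ}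
  {b : ι → ℝ} {τs : Fin d → Finset ι} {α β : ℝ} {r R : ℕ}

lemma pos (hcov : IsRowCovering A τs α β r R) : 0 < d := by
  obtain ⟨i, -⟩ := hcov.r_attained
  obtain ⟨l, -⟩ := hcov.cover i
  exact l.pos

lemma mul_sqNorm_le_sum_sqNorm_rowSub (hcov : IsRowCovering A τs α β r R) (v : κ → ℝ) :
    r * sqNorm (A *ᵥ v) ≤ ∑ l, sqNorm (rowSub A (τs l) *ᵥ v) := by
  have hblock : ∀ l, sqNorm (rowSub A (τs l) *ᵥ v) =
      ∑ i, if i ∈ τs l then (A *ᵥ v) i ^ 2 else 0 := fun l => by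
    rw [Finset.sum_ite_mem, Finset.univ_inter, sqNorm, ← Finset.sum_coe_sort (τs l)]
    rfl
  simp_rw [hblock]
  rw [Finset.sum_comm, sqNorm, Finset.mul_sum]
  refine Finset.sum_le_sum fun i _ => ?_
  rw [← Finset.sum_filter, Finset.sum_const, nsmul_eq_mul]
  gcongr
  exact_mod_cast hcov.r_le i

variable [DecidableEq κ]

lemma sum_sqNorm_sub_mpinv_mul_mulVec_le (hcov : IsRowCovering A τs α β r R) {v : κ → ℝ}
    (hv : ∀ w, A *ᵥ w = 0 → w ⬝ᵥ v = 0) :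
    ∑ l, sqNorm (v - (mpinv (rowSub A (τs l)) * rowSub A (τs l)) *ᵥ v) ≤
      d * (1 - r * lambdaMinPos (Aᵀ * A) / (β * d)) * sqNorm v := by
  set a := lambdaMinPos (Aᵀ * A)
  set X := ∑ l, sqNorm ((mpinv (rowSub A (τs l)) * rowSub A (τs l)) *ᵥ v)
  have hd : (d : ℝ) ≠ 0 := by exact_mod_cast hcov.pos.ne'
  have hβ : 0 ≤ β :=
    (posSemidef_mul_transpose_self _).lambdaMax_nonneg.trans (hcov.le_beta ⟨0, hcov.pos⟩)
  have hrayleigh : a * sqNorm v ≤ sqNorm (A *ᵥ v) := by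
    rw [sqNorm_mulVec]
    exact (posSemidef_transpose_mul_self A).isHermitian.lambdaMinPos_mul_le_dotProduct_mulVec
      fun w hw => hv w (mulVec_eq_zero_of_transpose_mul_mulVec_eq_zero A hw)
  have hX : r * a * sqNorm v ≤ X * β := calc
    r * a * sqNorm v ≤ r * sqNorm (A *ᵥ v) := by rw [mul_assoc]; gcongr
    _ ≤ ∑ l, sqNorm (rowSub A (τs l) *ᵥ v) := hcov.mul_sqNorm_le_sum_sqNorm_rowSub v
    _ ≤ ∑ l, β * sqNorm ((mpinv (rowSub A (τs l)) * rowSub A (τs l)) *ᵥ v) := by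
      refine Finset.sum_le_sum fun l _ => (sqNorm_mulVec_le_mpinv_mul_mulVec _ v).trans ?_
      gcongr
      · exact sqNorm_nonneg _
      · exact hcov.le_beta l
    _ = X * β := by rw [← Finset.mul_sum, mul_comm]
  have hdiv : d * (r * a / (β * d)) = r * a / β := by
    rw [← div_div, mul_div_cancel₀ _ hd]
  calc ∑ l, sqNorm (v - (mpinv (rowSub A (τs l)) * rowSub A (τs l)) *ᵥ v)
      = d * sqNorm v - X := by
        simp [X, sqNorm_sub_mpinv_mul_mulVec, Finset.sum_sub_distrib]
    -- for `β = 0` the subtracted term is the junk value `_ / 0 = 0`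
    _ ≤ d * sqNorm v - r * a * sqNorm v / β := by
        gcongr
        exact div_le_of_le_mul₀ hβ (Finset.sum_nonneg fun l _ => sqNorm_nonneg _) hX
    _ = d * (1 - r * a / (β * d)) * sqNorm v := by linear_combination sqNorm v * hdiv

theorem kaczIter_mean_sqNorm_sub_le (hcov : IsRowCovering A τs α β r R) {xs : κ → ℝ}
    (hxs : A *ᵥ xs = b) {x0 : κ → ℝ} (hx0 : ∀ w, A *ᵥ w = 0 → w ⬝ᵥ (x0 - xs) = 0) (k : ℕ) :
    (∑ σ : Fin k → Fin d, sqNorm (kaczIter A b τs x0 k σ - xs)) / (d : ℝ) ^ k ≤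
      (1 - r * lambdaMinPos (Aᵀ * A) / (β * d)) ^ k * sqNorm (x0 - xs) := by
  set ρ := 1 - r * lambdaMinPos (Aᵀ * A) / (β * d)
  have horth : ∀ k σ w, A *ᵥ w = 0 → w ⬝ᵥ (kaczIter A b τs x0 k σ - xs) = 0 := by
    intro k
    induction k with
    | zero => exact fun _ => hx0
    | succ k ih =>
      intro σ w hw
      rw [kaczIter, kaczStep_sub_of_mulVec_eq hxs]
      exact orthogonal_ker_sub_mpinv_mul_mulVec (ih _) _ hw
  let S k := ∑ σ : Fin k → Fin d, sqNorm (kaczIter A b τs x0 k σ - xs)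
  have hS : ∀ k, 0 ≤ S k := fun k => Finset.sum_nonneg fun σ _ => sqNorm_nonneg _
  have hS0 : S 0 = sqNorm (x0 - xs) := by simp [S, kaczIter]
  have hstep : ∀ k, S (k + 1) ≤ d * ρ * S k := fun k => by
    simp only [S, sum_kaczIter_succ (f := fun x => sqNorm (x - xs)), Finset.mul_sum]
    refine Finset.sum_le_sum fun σ _ => ?_
    simp only [kaczStep_sub_of_mulVec_eq hxs]
    exact hcov.sum_sqNorm_sub_mpinv_mul_mulVec_le (horth k σ)
  have hdk : (0 : ℝ) < (d : ℝ) ^ k := pow_pos (by exact_mod_cast hcov.pos) k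
  rw [div_le_iff₀ hdk]
  calc S k ≤ (d * ρ) ^ k * S 0 := le_pow_mul_of_le_mul hS hstep k
    _ = ρ ^ k * sqNorm (x0 - xs) * d ^ k := by rw [hS0, mul_pow]; ring

end IsRowCovering

namespace IsOrientedIncidence

variable {V E : Type*} [Fintype V] [DecidableEq V] {G : SimpleGraph V} {hd tl : E → V}
  {Q : Matrix E V ℝ}

lemma mulVec_apply (hQ : IsOrientedIncidence G hd tl Q) (y : V → ℝ) (e : E) :
    (Q *ᵥ y) e = y (hd e) - y (tl e) := by
  have hne : hd e ≠ tl e := (hQ.1 e).ne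
  rw [mulVec, dotProduct, Fintype.sum_eq_add (hd e) (tl e) hne fun v hv => by simp [hQ.2.2, hv]]
  simp [hQ.2.2, hne.symm, sub_eq_add_neg]

lemma mulVec_const (hQ : IsOrientedIncidence G hd tl Q) (t : ℝ) : Q *ᵥ (fun _ => t) = 0 :=
  funext fun e => by rw [hQ.mulVec_apply, sub_self, Pi.zero_apply]

lemma eq_of_reachable (hQ : IsOrientedIncidence G hd tl Q) {y : V → ℝ} (hy : Q *ᵥ y = 0)
    {a b : V} (hab : G.Reachable a b) : y a = y b := by
  obtain ⟨p⟩ := hab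
  induction p with
  | nil => rfl
  | @cons a b _ hadj _ ih =>
    obtain ⟨e, he, -⟩ := hQ.2.1 a b hadj
    have hyE : y (hd e) = y (tl e) := by
      rw [← sub_eq_zero, ← hQ.mulVec_apply, hy, Pi.zero_apply]
    rcases Sym2.eq_iff.1 he with ⟨rfl, rfl⟩ | ⟨rfl, rfl⟩
    · exact hyE.trans ih
    · exact hyE.symm.trans ih

end IsOrientedIncidence

/-- **Corollary (convergence of the block gossip method).** If `G` is connected with
oriented incidence matrix `Q` and `T` is a `(d, α, β, r, R)` row covering of `Q`, then
the block gossip method (= block randomized Kaczmarz on `Q x = 0` started at the initial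
node values `c`; expectation = average over all uniform i.i.d. block choice sequences)
converges linearly to the consensus vector `c* = mean(c)·1`:
`E‖c_k − c*‖² ≤ (1 − r α(G)/(β d))ᵏ ‖c − c*‖²`, where the algebraic connectivity
`α(G)` is the smallest nonzero eigenvalue of the Laplacian `L = QᵀQ`. -/
theorem block_gossip_convergence {V E : Type*} [Fintype V] [DecidableEq V]
    [Fintype E] [DecidableEq E] {d : ℕ}
    (G : SimpleGraph V) (hG : G.Connected)
    (Q : Matrix E V ℝ) (hQ : ∃ hd tl : E → V, IsOrientedIncidence G hd tl Q)
    (α β : ℝ) (r R : ℕ) (τs : Fin d → Finset E)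
    (hcov : IsRowCovering Q τs α β r R)
    (c cstar : V → ℝ)
    (hcstar : cstar = fun _ => (∑ v, c v) / (Fintype.card V : ℝ)) :
    ∀ k : ℕ,
      (∑ σ : Fin k → Fin d, sqNorm (kaczIter Q 0 τs c k σ - cstar)) / (d : ℝ) ^ k ≤
        (1 - (r : ℝ) * lambdaMinPos (Qᵀ * Q) / (β * d)) ^ k * sqNorm (c - cstar) := by
  obtain ⟨hd, tl, hinc⟩ := hQ
  obtain ⟨v0⟩ := hG.nonempty
  have hcard : (Fintype.card V : ℝ) ≠ 0 :=
    Nat.cast_ne_zero.mpr (Fintype.card_pos_iff.mpr hG.nonempty).ne'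
  have hmean : ∑ v, (c v - cstar v) = 0 := by
    rw [Finset.sum_sub_distrib, hcstar, Finset.sum_const, nsmul_eq_mul, Finset.card_univ,
      mul_div_cancel₀ _ hcard, sub_self]
  refine hcov.kaczIter_mean_sqNorm_sub_le (hcstar ▸ hinc.mulVec_const _) fun w hw => ?_
  have hw_const : w = fun _ => w v0 :=
    funext fun v => hinc.eq_of_reachable hw (hG.preconnected v v0)
  rw [hw_const, dotProduct, ← Finset.mul_sum]
  simp only [Pi.sub_apply, hmean, mul_zero]
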